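/- arXiv:1812.00386 — 6 statements merged into one kernel-verified Lean document; each statement's English description precedes it below -/
import Mathlib

section
/- Let Λ = (Λ_i)_{i∈ℕ} be a g-frame for H with respect to K with bounds A, B. Assume: (a) for every finite subset F ⊂ ℕ and every choice of vectors g_i ∈ K (i ∈ F), the equality Σ_{i∈F} Λ_i*(g_i) = 0 implies g_i = 0 for all i ∈ F; and (b) for every sequence (g_i)_{i∈ℕ} in K with Σ_{i∈ℕ} ‖g_i‖² < ∞ and Σ_{i∈ℕ} Λ_i*(g_i) = 0, one also has Σ_{i∈ℕ} Λ_{i+1}*(g_i) = 0 (i.e. the kernel of the synthesis operator is invariant under the right-shift). Then there exists a bounded linear operator T : H → H such that Λ_{i+1} = Λ_i ∘ T for all i ∈ ℕ, and ‖T‖ ≤ √(B/A). -/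
/-! The analysis operator `θ f = (Λ i f)ᵢ` into `ℓ²(ℕ, K)` is bounded below by the lower frame
bound, so it is injective with closed range, and its adjoint is the synthesis operator
`g ↦ ∑ Λ i† (g i)`. The shift hypothesis says that `ker θ†` is contained in the kernel of the
adjoint of the shifted analysis operator `σ f = (Λ (i + 1) f)ᵢ`; taking orthogonal complements,
`range σ ⊆ range θ`. Hence `T = θ⁻¹ ∘ σ` is well defined, `Λ (i + 1) = Λ i ∘ T`, and
`A ‖T f‖² ≤ ‖σ f‖² ≤ B ‖f‖²`. -/

open ContinuousLinearMap

lemma Real.le_sqrt_mul_of_sq_le {x y c : ℝ} (hy : 0 ≤ y) (h : x ^ 2 ≤ c * y ^ 2) : x ≤ √c * y := by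
  rw [← Real.sqrt_sq hy, ← Real.sqrt_mul' c (sq_nonneg y)]
  exact Real.le_sqrt_of_sq_le h

section Factorization

variable {𝕜 E F G : Type*} [NontriviallyNormedField 𝕜] [NormedAddCommGroup E] [NormedSpace 𝕜 E]
  [NormedAddCommGroup F] [NormedSpace 𝕜 F] [SeminormedAddCommGroup G] [NormedSpace 𝕜 G]
  {A B : ℝ}

lemma ContinuousLinearMap.exists_antilipschitzWith_of_sq_lower_bound (θ : E →L[𝕜] F)
    (hA : 0 < A) (hθ : ∀ x, A * ‖x‖ ^ 2 ≤ ‖θ x‖ ^ 2) : ∃ K, AntilipschitzWith K θ := by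
  refine ⟨⟨(√A)⁻¹, by positivity⟩, θ.antilipschitz_of_bound fun x => ?_⟩
  change ‖x‖ ≤ (√A)⁻¹ * ‖θ x‖
  rw [inv_mul_eq_div, le_div_iff₀ (Real.sqrt_pos.2 hA), mul_comm,
    ← Real.sqrt_sq (norm_nonneg (θ x)), ← Real.sqrt_sq (norm_nonneg x), ← Real.sqrt_mul hA.le]
  exact Real.sqrt_le_sqrt (hθ x)

theorem ContinuousLinearMap.exists_comp_eq_of_range_le (θ : E →L[𝕜] F) (S : G →L[𝕜] F)
    (hA : 0 < A) (hθ : ∀ x, A * ‖x‖ ^ 2 ≤ ‖θ x‖ ^ 2) (hS : ∀ y, ‖S y‖ ^ 2 ≤ B * ‖y‖ ^ 2)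
    (hrange : S.range ≤ θ.range) :
    ∃ T : G →L[𝕜] E, ‖T‖ ≤ √(B / A) ∧ θ ∘L T = S := by
  obtain ⟨c, hθc⟩ := θ.exists_antilipschitzWith_of_sq_lower_bound hA hθ
  let e := LinearEquiv.ofInjective (θ : E →ₗ[𝕜] F) hθc.injective
  let T : G →ₗ[𝕜] E := e.symm.toLinearMap ∘ₗ (S : G →ₗ[𝕜] F).codRestrict _ fun y => hrange ⟨y, rfl⟩
  have hθT : ∀ y, θ (T y) = S y := fun y =>
    congrArg Subtype.val (e.apply_symm_apply ⟨S y, hrange ⟨y, rfl⟩⟩)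
  have hT : ∀ y, ‖T y‖ ≤ √(B / A) * ‖y‖ := fun y => by
    refine Real.le_sqrt_mul_of_sq_le (norm_nonneg y) ?_
    rw [div_mul_eq_mul_div, le_div_iff₀ hA, mul_comm]
    exact (hθ (T y)).trans ((hθT y).symm ▸ hS y)
  exact ⟨T.mkContinuous _ hT, T.mkContinuous_norm_le (Real.sqrt_nonneg _) hT,
    ContinuousLinearMap.ext hθT⟩

end Factorization

section Adjoint

variable {𝕜 E F G : Type*} [RCLike 𝕜] [NormedAddCommGroup E] [InnerProductSpace 𝕜 E]
  [NormedAddCommGroup F] [InnerProductSpace 𝕜 F] [NormedAddCommGroup G] [InnerProductSpace 𝕜 G]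
  [CompleteSpace E] [CompleteSpace F] [CompleteSpace G]

theorem ContinuousLinearMap.range_le_range_of_ker_adjoint_le (θ : E →L[𝕜] F) (S : G →L[𝕜] F)
    (hθ : IsClosed (Set.range θ)) (h : (adjoint θ).ker ≤ (adjoint S).ker) :
    S.range ≤ θ.range := by
  calc S.range ≤ S.rangeᗮᗮ := Submodule.le_orthogonal_orthogonal _
    _ = (adjoint S).kerᗮ := by rw [S.orthogonal_range]
    _ ≤ (adjoint θ).kerᗮ := Submodule.orthogonal_le h
    _ = θ.rangeᗮᗮ := by rw [θ.orthogonal_range]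
    _ = θ.range := by
      rw [Submodule.orthogonal_orthogonal_eq_closure]
      exact IsClosed.submodule_topologicalClosure_eq (by rwa [LinearMap.coe_range, coe_coe])

end Adjoint

section AnalysisOperator

variable {ι 𝕜 H K : Type*} [RCLike 𝕜] [NormedAddCommGroup H] [InnerProductSpace 𝕜 H]
  [NormedAddCommGroup K] [InnerProductSpace 𝕜 K]

lemma memℓp_two_iff_summable_sq {f : ι → K} : Memℓp f 2 ↔ Summable fun i => ‖f i‖ ^ 2 := by
  simp [memℓp_gen_iff]

lemma lp.norm_sq_eq_tsum (f : lp (fun _ : ι => K) 2) : ‖f‖ ^ 2 = ∑' i, ‖f i‖ ^ 2 := by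
  simpa using lp.norm_rpow_eq_tsum (p := 2) (by norm_num) f

variable (Φ : ι → H →L[𝕜] K) (C : ℝ) (hΦ : ∀ f, Summable fun i => ‖Φ i f‖ ^ 2)
  (hC : ∀ f, ∑' i, ‖Φ i f‖ ^ 2 ≤ C * ‖f‖ ^ 2)

noncomputable def analysisOperator : H →L[𝕜] lp (fun _ : ι => K) 2 :=
  LinearMap.mkContinuous
    { toFun := fun f => ⟨fun i => Φ i f, memℓp_two_iff_summable_sq.2 (hΦ f)⟩
      map_add' := fun f g => Subtype.ext <| funext fun i => map_add (Φ i) f g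
      map_smul' := fun c f => Subtype.ext <| funext fun i => map_smul (Φ i) c f }
    √C fun f => Real.le_sqrt_mul_of_sq_le (norm_nonneg f) <| by
      rw [lp.norm_sq_eq_tsum]; exact hC f

@[simp]
lemma analysisOperator_apply (f : H) (i : ι) : analysisOperator Φ C hΦ hC f i = Φ i f := rfl

lemma norm_analysisOperator_sq (f : H) :
    ‖analysisOperator Φ C hΦ hC f‖ ^ 2 = ∑' i, ‖Φ i f‖ ^ 2 :=
  lp.norm_sq_eq_tsum _

variable [CompleteSpace H] [CompleteSpace K]

lemma adjoint_analysisOperator_single [DecidableEq ι] (i : ι) (x : K) :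
    adjoint (analysisOperator Φ C hΦ hC) (lp.single 2 i x) = adjoint (Φ i) x :=
  ext_inner_right 𝕜 fun f => by
    rw [adjoint_inner_left, adjoint_inner_left, lp.inner_single_left, analysisOperator_apply]

lemma hasSum_adjoint_analysisOperator (g : lp (fun _ : ι => K) 2) :
    HasSum (fun i => adjoint (Φ i) (g i)) (adjoint (analysisOperator Φ C hΦ hC) g) := by
  classical
  simpa only [adjoint_analysisOperator_single] using
    (lp.hasSum_single (by norm_num) g).mapL (adjoint (analysisOperator Φ C hΦ hC))

end AnalysisOperator

theorem gframe_has_representation_of_shift_invariant_kernel_general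
    {H K : Type*} [NormedAddCommGroup H] [InnerProductSpace ℂ H] [CompleteSpace H]
    [NormedAddCommGroup K] [InnerProductSpace ℂ K] [CompleteSpace K]
    (Λ : ℕ → (H →L[ℂ] K)) (A B : ℝ) (hA : 0 < A)
    (hsum : ∀ f : H, Summable fun i : ℕ => ‖Λ i f‖ ^ 2)
    (hlow : ∀ f : H, A * ‖f‖ ^ 2 ≤ ∑' i : ℕ, ‖Λ i f‖ ^ 2)
    (hup : ∀ f : H, ∑' i : ℕ, ‖Λ i f‖ ^ 2 ≤ B * ‖f‖ ^ 2)
    (hker : ∀ g : ℕ → K, Summable (fun i : ℕ => ‖g i‖ ^ 2) →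
      (∑' i : ℕ, ContinuousLinearMap.adjoint (Λ i) (g i)) = 0 →
      (∑' i : ℕ, ContinuousLinearMap.adjoint (Λ (i + 1)) (g i)) = 0) :
    ∃ T : H →L[ℂ] H, ‖T‖ ≤ Real.sqrt (B / A) ∧ ∀ i : ℕ, Λ (i + 1) = (Λ i).comp T := by
  have hsum' (f : H) : Summable fun i => ‖Λ (i + 1) f‖ ^ 2 := (summable_nat_add_iff 1).2 (hsum f)
  have hup' (f : H) : ∑' i, ‖Λ (i + 1) f‖ ^ 2 ≤ B * ‖f‖ ^ 2 :=
    (tsum_comp_le_tsum_of_inj (hsum f) (fun _ => sq_nonneg _) (add_left_injective 1)).trans (hup f)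
  set θ := analysisOperator Λ B hsum hup
  set σ := analysisOperator (fun i => Λ (i + 1)) B hsum' hup'
  have hθ (f : H) : A * ‖f‖ ^ 2 ≤ ‖θ f‖ ^ 2 := norm_analysisOperator_sq Λ B hsum hup f ▸ hlow f
  have hσ (f : H) : ‖σ f‖ ^ 2 ≤ B * ‖f‖ ^ 2 := norm_analysisOperator_sq _ B hsum' hup' f ▸ hup' f
  have hker' : (adjoint θ).ker ≤ (adjoint σ).ker := fun g hg => by
    have hg2 : Summable fun i => ‖g i‖ ^ 2 := memℓp_two_iff_summable_sq.1 g.2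
    have h0 := hker g hg2 ((hasSum_adjoint_analysisOperator Λ B hsum hup g).tsum_eq.trans hg)
    exact (hasSum_adjoint_analysisOperator _ B hsum' hup' g).tsum_eq.symm.trans h0
  obtain ⟨c, hθc⟩ := θ.exists_antilipschitzWith_of_sq_lower_bound hA hθ
  obtain ⟨T, hTnorm, hθT⟩ := θ.exists_comp_eq_of_range_le σ hA hθ hσ
    (θ.range_le_range_of_ker_adjoint_le σ (hθc.isClosed_range θ.uniformContinuous) hker')
  refine ⟨T, hTnorm, fun i => ContinuousLinearMap.ext fun f => ?_⟩
  exact congrArg (fun g : lp (fun _ : ℕ => K) 2 => g i) (DFunLike.congr_fun hθT f).symm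

/-- A g-frame `Λ = (Λ_i)_{i∈ℕ}` for `H` with respect to `K` with bounds `A, B`
such that (a) finite sums `∑_{i∈F} Λ_i* g_i = 0` force all `g_i = 0`, and (b) the kernel of
the synthesis operator is invariant under the right shift, admits a representation
`Λ_{i+1} = Λ_i ∘ T` with `T` bounded and `‖T‖ ≤ √(B/A)`. -/
theorem gframe_has_representation_of_shift_invariant_kernel
    {H K : Type*} [NormedAddCommGroup H] [InnerProductSpace ℂ H] [CompleteSpace H]
    [TopologicalSpace.SeparableSpace H]
    [NormedAddCommGroup K] [InnerProductSpace ℂ K] [CompleteSpace K]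
    [TopologicalSpace.SeparableSpace K]
    (Λ : ℕ → (H →L[ℂ] K)) (A B : ℝ) (hA : 0 < A) (hAB : A ≤ B)
    (hsum : ∀ f : H, Summable fun i : ℕ => ‖Λ i f‖ ^ 2)
    (hlow : ∀ f : H, A * ‖f‖ ^ 2 ≤ ∑' i : ℕ, ‖Λ i f‖ ^ 2)
    (hup : ∀ f : H, ∑' i : ℕ, ‖Λ i f‖ ^ 2 ≤ B * ‖f‖ ^ 2)
    (hindep : ∀ (F : Finset ℕ) (g : ℕ → K),
      (∑ i ∈ F, ContinuousLinearMap.adjoint (Λ i) (g i)) = 0 → ∀ i ∈ F, g i = 0)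
    (hker : ∀ g : ℕ → K, Summable (fun i : ℕ => ‖g i‖ ^ 2) →
      (∑' i : ℕ, ContinuousLinearMap.adjoint (Λ i) (g i)) = 0 →
      (∑' i : ℕ, ContinuousLinearMap.adjoint (Λ (i + 1)) (g i)) = 0) :
    ∃ T : H →L[ℂ] H, ‖T‖ ≤ Real.sqrt (B / A) ∧ ∀ i : ℕ, Λ (i + 1) = (Λ i).comp T :=
  gframe_has_representation_of_shift_invariant_kernel_general Λ A B hA hsum hlow hup hker
end

section
/- Let Λ = (Λ_i)_{i∈ℕ} be a g-frame for H with respect to K with bounds A, B that is represented by a bounded operator T : H → H, and let S : H → H be a bounded invertible operator with bounded inverse. Then the family (Λ_i ∘ S)_{i∈ℕ} is a g-frame for H with respect to K with bounds A·‖S⁻¹‖⁻² and B·‖S‖², and it is represented by the bounded operator S⁻¹ ∘ T ∘ S, i.e. Λ_{i+1} ∘ S = (Λ_i ∘ S) ∘ (S⁻¹ T S) for all i ∈ ℕ. -/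
section Precomposition

variable {𝕜 E F G ι : Type*} [NontriviallyNormedField 𝕜]
  [NormedAddCommGroup E] [NormedSpace 𝕜 E] [NormedAddCommGroup F] [NormedSpace 𝕜 F]
  [NormedAddCommGroup G] [NormedSpace 𝕜 G]

theorem ContinuousLinearEquiv.norm_le_opNorm_symm_mul (S : E ≃L[𝕜] F) (x : E) :
    ‖x‖ ≤ ‖(S.symm : F →L[𝕜] E)‖ * ‖S x‖ := by
  simpa using (S.symm : F →L[𝕜] E).le_opNorm (S x)

-- When `‖S⁻¹‖ = 0` (only if `E` is trivial) the left side is `0⁻¹ * ‖x‖ ^ 2 = 0`.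
theorem ContinuousLinearEquiv.inv_opNorm_symm_sq_mul_norm_sq_le (S : E ≃L[𝕜] F) (x : E) :
    (‖(S.symm : F →L[𝕜] E)‖ ^ 2)⁻¹ * ‖x‖ ^ 2 ≤ ‖S x‖ ^ 2 := by
  rcases (norm_nonneg (S.symm : F →L[𝕜] E)).eq_or_lt with hzero | hpos
  · simp [← hzero]
  · rw [inv_mul_le_iff₀ (by positivity), ← mul_pow]
    exact pow_le_pow_left₀ (norm_nonneg x) (S.norm_le_opNorm_symm_mul x) 2

theorem tsum_norm_comp_sq_le {Λ : ι → F →L[𝕜] G} {B : ℝ} (hB : 0 ≤ B)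
    (hup : ∀ y : F, ∑' i, ‖Λ i y‖ ^ 2 ≤ B * ‖y‖ ^ 2) (S : E →L[𝕜] F) (x : E) :
    ∑' i, ‖(Λ i).comp S x‖ ^ 2 ≤ B * ‖S‖ ^ 2 * ‖x‖ ^ 2 :=
  calc ∑' i, ‖(Λ i).comp S x‖ ^ 2 ≤ B * ‖S x‖ ^ 2 := hup (S x)
    _ ≤ B * (‖S‖ * ‖x‖) ^ 2 := by gcongr; exact S.le_opNorm x
    _ = B * ‖S‖ ^ 2 * ‖x‖ ^ 2 := by ring

theorem le_tsum_norm_comp_equiv_sq {Λ : ι → F →L[𝕜] G} {A : ℝ} (hA : 0 ≤ A)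
    (hlow : ∀ y : F, A * ‖y‖ ^ 2 ≤ ∑' i, ‖Λ i y‖ ^ 2) (S : E ≃L[𝕜] F) (x : E) :
    A * (‖(S.symm : F →L[𝕜] E)‖ ^ 2)⁻¹ * ‖x‖ ^ 2 ≤ ∑' i, ‖(Λ i).comp (S : E →L[𝕜] F) x‖ ^ 2 :=
  calc A * (‖(S.symm : F →L[𝕜] E)‖ ^ 2)⁻¹ * ‖x‖ ^ 2
      = A * ((‖(S.symm : F →L[𝕜] E)‖ ^ 2)⁻¹ * ‖x‖ ^ 2) := mul_assoc _ _ _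
    _ ≤ A * ‖S x‖ ^ 2 := by gcongr; exact S.inv_opNorm_symm_sq_mul_norm_sq_le x
    _ ≤ ∑' i, ‖(Λ i).comp (S : E →L[𝕜] F) x‖ ^ 2 := hlow (S x)

theorem comp_equiv_succ_of_comp_succ {Λ : ℕ → F →L[𝕜] G} {T : F →L[𝕜] F}
    (hrep : ∀ i, Λ (i + 1) = (Λ i).comp T) (S : E ≃L[𝕜] F) (i : ℕ) :
    (Λ (i + 1)).comp (S : E →L[𝕜] F) =
      ((Λ i).comp (S : E →L[𝕜] F)).comp (((S.symm : F →L[𝕜] E).comp T).comp (S : E →L[𝕜] F)) := by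
  ext x
  simp [hrep i]

end Precomposition

theorem gframe_comp_invertible_representation_general
    {H K : Type*} [NormedAddCommGroup H] [InnerProductSpace ℂ H]
    [NormedAddCommGroup K] [InnerProductSpace ℂ K]
    (Λ : ℕ → (H →L[ℂ] K)) (A B : ℝ) (hA : 0 < A) (hAB : A ≤ B)
    (hsum : ∀ f : H, Summable fun i : ℕ => ‖Λ i f‖ ^ 2)
    (hlow : ∀ f : H, A * ‖f‖ ^ 2 ≤ ∑' i : ℕ, ‖Λ i f‖ ^ 2)
    (hup : ∀ f : H, ∑' i : ℕ, ‖Λ i f‖ ^ 2 ≤ B * ‖f‖ ^ 2)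
    (T : H →L[ℂ] H) (hrep : ∀ i : ℕ, Λ (i + 1) = (Λ i).comp T)
    (S : H ≃L[ℂ] H) :
    (∀ f : H, Summable fun i : ℕ => ‖(Λ i).comp (S : H →L[ℂ] H) f‖ ^ 2) ∧
    (∀ f : H, A * (‖(S.symm : H →L[ℂ] H)‖ ^ 2)⁻¹ * ‖f‖ ^ 2 ≤
      ∑' i : ℕ, ‖(Λ i).comp (S : H →L[ℂ] H) f‖ ^ 2) ∧
    (∀ f : H, ∑' i : ℕ, ‖(Λ i).comp (S : H →L[ℂ] H) f‖ ^ 2 ≤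
      B * ‖(S : H →L[ℂ] H)‖ ^ 2 * ‖f‖ ^ 2) ∧
    (∀ i : ℕ, (Λ (i + 1)).comp (S : H →L[ℂ] H) =
      ((Λ i).comp (S : H →L[ℂ] H)).comp
        (((S.symm : H →L[ℂ] H).comp T).comp (S : H →L[ℂ] H))) :=
  ⟨fun f => hsum (S f), fun f => le_tsum_norm_comp_equiv_sq hA.le hlow S f,
    fun f => tsum_norm_comp_sq_le (hA.le.trans hAB) hup (S : H →L[ℂ] H) f,
    fun i => comp_equiv_succ_of_comp_succ hrep S i⟩

/-- If a g-frame `Λ` with bounds `A, B` is represented by a bounded `T`, and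
`S ∈ GL(H)`, then `(Λ_i ∘ S)` is a g-frame with bounds `A·‖S⁻¹‖⁻²` and `B·‖S‖²`, represented
by `S⁻¹ ∘ T ∘ S`. -/
theorem gframe_comp_invertible_representation
    {H K : Type*} [NormedAddCommGroup H] [InnerProductSpace ℂ H] [CompleteSpace H]
    [TopologicalSpace.SeparableSpace H]
    [NormedAddCommGroup K] [InnerProductSpace ℂ K] [CompleteSpace K]
    [TopologicalSpace.SeparableSpace K]
    (Λ : ℕ → (H →L[ℂ] K)) (A B : ℝ) (hA : 0 < A) (hAB : A ≤ B)
    (hsum : ∀ f : H, Summable fun i : ℕ => ‖Λ i f‖ ^ 2)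
    (hlow : ∀ f : H, A * ‖f‖ ^ 2 ≤ ∑' i : ℕ, ‖Λ i f‖ ^ 2)
    (hup : ∀ f : H, ∑' i : ℕ, ‖Λ i f‖ ^ 2 ≤ B * ‖f‖ ^ 2)
    (T : H →L[ℂ] H) (hrep : ∀ i : ℕ, Λ (i + 1) = (Λ i).comp T)
    (S : H ≃L[ℂ] H) :
    (∀ f : H, Summable fun i : ℕ => ‖(Λ i).comp (S : H →L[ℂ] H) f‖ ^ 2) ∧
    (∀ f : H, A * (‖(S.symm : H →L[ℂ] H)‖ ^ 2)⁻¹ * ‖f‖ ^ 2 ≤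
      ∑' i : ℕ, ‖(Λ i).comp (S : H →L[ℂ] H) f‖ ^ 2) ∧
    (∀ f : H, ∑' i : ℕ, ‖(Λ i).comp (S : H →L[ℂ] H) f‖ ^ 2 ≤
      B * ‖(S : H →L[ℂ] H)‖ ^ 2 * ‖f‖ ^ 2) ∧
    (∀ i : ℕ, (Λ (i + 1)).comp (S : H →L[ℂ] H) =
      ((Λ i).comp (S : H →L[ℂ] H)).comp
        (((S.symm : H →L[ℂ] H).comp T).comp (S : H →L[ℂ] H))) :=
  gframe_comp_invertible_representation_general Λ A B hA hAB hsum hlow hup T hrep S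
end

section
/- Every g-Riesz basis (Λ_i)_{i∈ℕ} for H with respect to K admits a representation: there exists a bounded linear operator T : H → H such that Λ_{i+1} = Λ_i ∘ T for all i ∈ ℕ. -/
open ContinuousLinearMap

/-!
Let `U g = ∑ Λ i† (g i)` and `V g = ∑ Λ (i + 1)† (g i)` on finitely supported `g`. The Riesz bounds
give `‖V g‖² ≤ B ∑ ‖g i‖² ≤ (B / A) ‖U g‖²`, and `U` has dense range because `Λ` is g-complete, so
`V = S ∘ U` for a bounded `S` on `H`. Then `S ∘ Λ i† = Λ (i + 1)†`, and `T = S†` satisfies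
`Λ (i + 1) = Λ i ∘ T`.
-/

section Synthesis

variable {𝕜 ι H K : Type*} [RCLike 𝕜]
  [NormedAddCommGroup H] [InnerProductSpace 𝕜 H] [CompleteSpace H]
  [NormedAddCommGroup K] [InnerProductSpace 𝕜 K] [CompleteSpace K]

noncomputable def gSynthesis (Λ : ι → H →L[𝕜] K) : (ι →₀ K) →ₗ[𝕜] H :=
  Finsupp.lsum 𝕜 fun i => (adjoint (Λ i)).toLinearMap

theorem gSynthesis_apply (Λ : ι → H →L[𝕜] K) (g : ι →₀ K) :
    gSynthesis Λ g = ∑ i ∈ g.support, adjoint (Λ i) (g i) :=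
  rfl

@[simp]
theorem gSynthesis_single (Λ : ι → H →L[𝕜] K) (i : ι) (k : K) :
    gSynthesis Λ (Finsupp.single i k) = adjoint (Λ i) k :=
  Finsupp.lsum_single _ _ _ _

theorem denseRange_gSynthesis {Λ : ι → H →L[𝕜] K} (hΛ : ∀ f, (∀ i, Λ i f = 0) → f = 0) :
    DenseRange (gSynthesis Λ) := by
  have hdense : Dense (LinearMap.range (gSynthesis Λ) : Set H) := by
    rw [Submodule.dense_iff_topologicalClosure_eq_top, Submodule.topologicalClosure_eq_top_iff,
      Submodule.eq_bot_iff]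
    intro f hf
    refine hΛ f fun i => (inner_self_eq_zero (𝕜 := 𝕜)).1 ?_
    rw [← adjoint_inner_left]
    exact (Submodule.mem_orthogonal _ f).1 hf _ ⟨Finsupp.single i (Λ i f), gSynthesis_single ..⟩
  rwa [LinearMap.coe_range] at hdense

theorem eq_comp_adjoint_of_comp_adjoint_eq {G : Type*} [NormedAddCommGroup G]
    [InnerProductSpace 𝕜 G] [CompleteSpace G] {L : H →L[𝕜] K} {L' : G →L[𝕜] K} {S : H →L[𝕜] G}
    (h : S ∘L adjoint L = adjoint L') : L' = L ∘L adjoint S := by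
  rw [← adjoint_adjoint L', ← h, adjoint_comp, adjoint_adjoint]

theorem exists_eq_comp_of_norm_gSynthesis_le {G : Type*} [NormedAddCommGroup G]
    [InnerProductSpace 𝕜 G] [CompleteSpace G] {Λ : ι → H →L[𝕜] K} {Λ' : ι → G →L[𝕜] K} {C : ℝ}
    (hdense : DenseRange (gSynthesis Λ))
    (hle : ∀ g, ‖gSynthesis Λ' g‖ ≤ C * ‖gSynthesis Λ g‖) :
    ∃ T : G →L[𝕜] H, ∀ i, Λ' i = Λ i ∘L T := by
  refine ⟨adjoint ((gSynthesis Λ').extendOfNorm (gSynthesis Λ)),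
    fun i => eq_comp_adjoint_of_comp_adjoint_eq (ext fun k => ?_)⟩
  simpa using LinearMap.extendOfNorm_eq hdense ⟨C, hle⟩ (Finsupp.single i k)

theorem sq_norm_gSynthesis_succ_le {Λ : ℕ → H →L[𝕜] K} {B : ℝ}
    (hB : ∀ (F : Finset ℕ) (g : ℕ → K),
      ‖∑ i ∈ F, adjoint (Λ i) (g i)‖ ^ 2 ≤ B * ∑ i ∈ F, ‖g i‖ ^ 2)
    (g : ℕ →₀ K) :
    ‖gSynthesis (fun i => Λ (i + 1)) g‖ ^ 2 ≤ B * ∑ i ∈ g.support, ‖g i‖ ^ 2 := by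
  simpa [Finset.sum_map, gSynthesis_apply] using
    hB (g.support.map (addRightEmbedding 1)) fun j => g (j - 1)

theorem norm_gSynthesis_succ_le {Λ : ℕ → H →L[𝕜] K} {A B : ℝ} (hA : 0 < A) (hB : 0 ≤ B)
    (hlower : ∀ (F : Finset ℕ) (g : ℕ → K),
      A * ∑ i ∈ F, ‖g i‖ ^ 2 ≤ ‖∑ i ∈ F, adjoint (Λ i) (g i)‖ ^ 2)
    (hupper : ∀ (F : Finset ℕ) (g : ℕ → K),
      ‖∑ i ∈ F, adjoint (Λ i) (g i)‖ ^ 2 ≤ B * ∑ i ∈ F, ‖g i‖ ^ 2)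
    (g : ℕ →₀ K) :
    ‖gSynthesis (fun i => Λ (i + 1)) g‖ ≤ √(B / A) * ‖gSynthesis Λ g‖ := by
  have hsq : ‖gSynthesis (fun i => Λ (i + 1)) g‖ ^ 2 ≤ B / A * ‖gSynthesis Λ g‖ ^ 2 :=
    calc ‖gSynthesis (fun i => Λ (i + 1)) g‖ ^ 2
        ≤ B * ∑ i ∈ g.support, ‖g i‖ ^ 2 := sq_norm_gSynthesis_succ_le hupper g
      _ = B / A * (A * ∑ i ∈ g.support, ‖g i‖ ^ 2) := by field_simp
      _ ≤ B / A * ‖gSynthesis Λ g‖ ^ 2 := by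
        gcongr
        exact hlower g.support g
  calc ‖gSynthesis (fun i => Λ (i + 1)) g‖
      = √(‖gSynthesis (fun i => Λ (i + 1)) g‖ ^ 2) := (Real.sqrt_sq (norm_nonneg _)).symm
    _ ≤ √(B / A * ‖gSynthesis Λ g‖ ^ 2) := Real.sqrt_le_sqrt hsq
    _ = √(B / A) * ‖gSynthesis Λ g‖ := by
      rw [Real.sqrt_mul (by positivity), Real.sqrt_sq (norm_nonneg _)]

end Synthesis

theorem gRieszBasis_has_representation_general
    {H K : Type*} [NormedAddCommGroup H] [InnerProductSpace ℂ H] [CompleteSpace H]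
    [NormedAddCommGroup K] [InnerProductSpace ℂ K] [CompleteSpace K]
    (Λ : ℕ → (H →L[ℂ] K)) (A B : ℝ) (hA : 0 < A) (hAB : A ≤ B)
    (hcomplete : ∀ f : H, (∀ i : ℕ, Λ i f = 0) → f = 0)
    (hriesz : ∀ (F : Finset ℕ) (g : ℕ → K),
      A * ∑ i ∈ F, ‖g i‖ ^ 2 ≤ ‖∑ i ∈ F, ContinuousLinearMap.adjoint (Λ i) (g i)‖ ^ 2 ∧
      ‖∑ i ∈ F, ContinuousLinearMap.adjoint (Λ i) (g i)‖ ^ 2 ≤ B * ∑ i ∈ F, ‖g i‖ ^ 2) :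
    ∃ T : H →L[ℂ] H, ∀ i : ℕ, Λ (i + 1) = (Λ i).comp T :=
  exists_eq_comp_of_norm_gSynthesis_le (Λ' := fun i => Λ (i + 1))
    (denseRange_gSynthesis hcomplete)
    (norm_gSynthesis_succ_le hA (hA.le.trans hAB) (fun F g => (hriesz F g).1)
      (fun F g => (hriesz F g).2))

/-- Every g-Riesz basis `(Λ_i)_{i∈ℕ}` for `H` with respect to `K` admits a
representation: there is a bounded `T : H → H` with `Λ_{i+1} = Λ_i ∘ T` for all `i`. -/
theorem gRieszBasis_has_representation
    {H K : Type*} [NormedAddCommGroup H] [InnerProductSpace ℂ H] [CompleteSpace H]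
    [TopologicalSpace.SeparableSpace H]
    [NormedAddCommGroup K] [InnerProductSpace ℂ K] [CompleteSpace K]
    [TopologicalSpace.SeparableSpace K]
    (Λ : ℕ → (H →L[ℂ] K)) (A B : ℝ) (hA : 0 < A) (hAB : A ≤ B)
    (hcomplete : ∀ f : H, (∀ i : ℕ, Λ i f = 0) → f = 0)
    (hriesz : ∀ (F : Finset ℕ) (g : ℕ → K),
      A * ∑ i ∈ F, ‖g i‖ ^ 2 ≤ ‖∑ i ∈ F, ContinuousLinearMap.adjoint (Λ i) (g i)‖ ^ 2 ∧
      ‖∑ i ∈ F, ContinuousLinearMap.adjoint (Λ i) (g i)‖ ^ 2 ≤ B * ∑ i ∈ F, ‖g i‖ ^ 2) :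
    ∃ T : H →L[ℂ] H, ∀ i : ℕ, Λ (i + 1) = (Λ i).comp T :=
  gRieszBasis_has_representation_general Λ A B hA hAB hcomplete hriesz
end

section
/- Let (K_i)_{i∈I} be a family of complex separable Hilbert spaces indexed by a countable set I, and let Λ = (Λ_i)_{i∈I} be a family of bounded linear operators Λ_i : H → K_i. Then Λ is a g-Riesz basis for H if and only if there exist a g-orthonormal basis (Θ_i)_{i∈I} for H (with Θ_i : H → K_i) and a bounded invertible operator U : H → H with bounded inverse such that Λ_i = Θ_i ∘ U for all i ∈ I. -/
/-!
The analysis operator `V f = (Λ i f)ᵢ` of a g-Riesz basis is a linear homeomorphism of `H` onto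
`ℓ²(K)`: the upper Riesz bound makes it bounded, while the lower bound together with g-completeness
makes its adjoint, the synthesis operator `x ↦ ∑ Λᵢ* xᵢ`, bounded below with dense range. The polar
part `W = V (V* V)^{-1/2}` of `V` is unitary, so `Θ i = evalᵢ ∘ W` is a g-orthonormal basis and
`Λ i = Θ i ∘ U` with `U = W⁻¹ V = (V* V)^{1/2}`. Conversely, orthonormality makes
`g ↦ ∑ Θᵢ* gᵢ` isometric on finite sums, and `∑ Λᵢ* gᵢ = U* (∑ Θᵢ* gᵢ)` with `U*` invertible.
-/

open ContinuousLinearMap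

namespace ContinuousLinearEquiv

section Bounds

variable {𝕜 E F : Type*} [NontriviallyNormedField 𝕜] [NormedAddCommGroup E] [NormedSpace 𝕜 E]
  [NormedAddCommGroup F] [NormedSpace 𝕜 F]

theorem exists_two_sided_norm_sq_bound (e : E ≃L[𝕜] F) :
    ∃ A B : ℝ, 0 < A ∧ A ≤ B ∧ ∀ x, A * ‖x‖ ^ 2 ≤ ‖e x‖ ^ 2 ∧ ‖e x‖ ^ 2 ≤ B * ‖x‖ ^ 2 := by
  set C := max (max ‖(e : E →L[𝕜] F)‖ ‖(e.symm : F →L[𝕜] E)‖) 1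
  have hC : 1 ≤ C := le_max_right _ _
  have hupper (x : E) : ‖e x‖ ≤ C * ‖x‖ :=
    (e : E →L[𝕜] F).le_opNorm x |>.trans <| by gcongr; exact le_max_of_le_left (le_max_left _ _)
  have hlower (x : E) : ‖x‖ ≤ C * ‖e x‖ :=
    calc ‖x‖ = ‖(e.symm : F →L[𝕜] E) (e x)‖ := by simp
      _ ≤ C * ‖e x‖ := (e.symm : F →L[𝕜] E).le_opNorm _ |>.trans <| by
          gcongr; exact le_max_of_le_left (le_max_right _ _)
  refine ⟨(C ^ 2)⁻¹, C ^ 2, by positivity, ?_, fun x => ⟨?_, ?_⟩⟩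
  · exact (inv_le_one_of_one_le₀ (one_le_pow₀ hC)).trans (one_le_pow₀ hC)
  · rw [inv_mul_le_iff₀ (by positivity), ← mul_pow]
    exact pow_le_pow_left₀ (norm_nonneg _) (hlower x) 2
  · rw [← mul_pow]
    exact pow_le_pow_left₀ (norm_nonneg _) (hupper x) 2

end Bounds

variable {𝕜 E F : Type*} [RCLike 𝕜] [NormedAddCommGroup E] [InnerProductSpace 𝕜 E] [CompleteSpace E]
  [NormedAddCommGroup F] [InnerProductSpace 𝕜 F] [CompleteSpace F]

noncomputable def adjoint (e : E ≃L[𝕜] F) : F ≃L[𝕜] E :=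
  equivOfInverse (ContinuousLinearMap.adjoint (e : E →L[𝕜] F))
    (ContinuousLinearMap.adjoint (e.symm : F →L[𝕜] E))
    (fun y => by rw [← comp_apply, ← adjoint_comp, coe_comp_coe_symm, adjoint_id, id_apply])
    (fun x => by rw [← comp_apply, ← adjoint_comp, coe_symm_comp_coe, adjoint_id, id_apply])

@[simp]
theorem coe_adjoint (e : E ≃L[𝕜] F) : ⇑e.adjoint = ContinuousLinearMap.adjoint (e : E →L[𝕜] F) :=
  rfl

end ContinuousLinearEquiv

section Polar

variable {E F : Type*} [NormedAddCommGroup E] [InnerProductSpace ℂ E] [CompleteSpace E]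
  [NormedAddCommGroup F] [InnerProductSpace ℂ F] [CompleteSpace F]

theorem ContinuousLinearMap.norm_sqrt_adjoint_comp_self_apply (T : E →L[ℂ] F) (x : E) :
    ‖CFC.sqrt (adjoint T ∘L T) x‖ = ‖T x‖ := by
  have hS : 0 ≤ adjoint T ∘L T := (nonneg_iff_isPositive _).mpr T.isPositive_adjoint_comp_self
  set R := CFC.sqrt (adjoint T ∘L T)
  have hR : adjoint R = R := (IsSelfAdjoint.of_nonneg (CFC.sqrt_nonneg _)).adjoint_eq
  rw [← sq_eq_sq₀ (norm_nonneg _) (norm_nonneg _), ← inner_self_eq_norm_sq (𝕜 := ℂ),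
    ← inner_self_eq_norm_sq (𝕜 := ℂ), ← adjoint_inner_left, hR, ← mul_apply_eq_comp,
    CFC.sqrt_mul_sqrt_self _ hS, comp_apply, adjoint_inner_left]

theorem ContinuousLinearEquiv.nonempty_linearIsometryEquiv (e : E ≃L[ℂ] F) :
    Nonempty (E ≃ₗᵢ[ℂ] F) := by
  set T := (e : E →L[ℂ] F)
  have hS : IsUnit (ContinuousLinearMap.adjoint T ∘L T) :=
    ⟨(ContinuousLinearEquiv.unitsEquiv ℂ E).symm (e.trans e.adjoint), by ext; rfl⟩
  obtain ⟨r, hr⟩ := (CFC.isUnit_sqrt_iff _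
    ((nonneg_iff_isPositive _).mpr T.isPositive_adjoint_comp_self)).mpr hS
  set u := ContinuousLinearEquiv.unitsEquiv ℂ E r
  refine ⟨{ (u.symm.trans e).toLinearEquiv with norm_map' := fun x => ?_ }⟩
  have hu : CFC.sqrt (ContinuousLinearMap.adjoint T ∘L T) (u.symm x) = x := by
    rw [← hr]; exact u.apply_symm_apply x
  change ‖T (u.symm x)‖ = ‖x‖
  rw [← T.norm_sqrt_adjoint_comp_self_apply, hu]

end Polar

section Bijective

variable {𝕜 E F : Type*} [RCLike 𝕜] [NormedAddCommGroup E] [InnerProductSpace 𝕜 E]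
  [CompleteSpace E] [NormedAddCommGroup F] [InnerProductSpace 𝕜 F] [CompleteSpace F]

theorem ContinuousLinearMap.bijective_of_mul_norm_sq_le_of_injective_adjoint (T : E →L[𝕜] F)
    {A : ℝ} (hA : 0 < A) (hT : ∀ x, A * ‖x‖ ^ 2 ≤ ‖T x‖ ^ 2)
    (hinj : Function.Injective (adjoint T)) : Function.Bijective T := by
  rw [bijective_iff_dense_range_and_antilipschitz]
  refine ⟨?_, ⟨⟨(√A)⁻¹, by positivity⟩, T.antilipschitz_of_bound fun x => ?_⟩⟩
  · rw [Submodule.topologicalClosure_eq_top_iff, orthogonal_range, LinearMap.ker_eq_bot]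
    exact hinj
  · have : √A * ‖x‖ ≤ ‖T x‖ := by
      rw [← pow_le_pow_iff_left₀ (by positivity) (norm_nonneg _) two_ne_zero, mul_pow,
        Real.sq_sqrt hA.le]
      exact hT x
    change ‖x‖ ≤ (√A)⁻¹ * ‖T x‖
    rw [inv_mul_eq_div, le_div_iff₀ (by positivity)]
    linarith

end Bijective

namespace lp

variable {ι : Type*} {K : ι → Type*} [∀ i, NormedAddCommGroup (K i)]

theorem hasSum_norm_sq (x : lp K 2) : HasSum (fun i => ‖x i‖ ^ 2) (‖x‖ ^ 2) := by
  simpa using lp.hasSum_norm (p := 2) (by norm_num) x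

theorem norm_sum_single_sq [DecidableEq ι] (F : Finset ι) (g : ∀ i, K i) :
    ‖∑ i ∈ F, lp.single 2 i (g i)‖ ^ 2 = ∑ i ∈ F, ‖g i‖ ^ 2 := by
  simpa using lp.norm_sum_single (p := 2) (by norm_num) g F

variable {𝕜 : Type*} [RCLike 𝕜] [∀ i, NormedSpace 𝕜 (K i)] {E : Type*} [NormedAddCommGroup E] [NormedSpace 𝕜 E]

theorem mul_norm_sq_le_norm_apply_sq_of_sum_single [DecidableEq ι] {T : lp K 2 →L[𝕜] E}
    {A : ℝ} (hT : ∀ (F : Finset ι) (g : ∀ i, K i),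
      A * ∑ i ∈ F, ‖g i‖ ^ 2 ≤ ‖T (∑ i ∈ F, lp.single 2 i (g i))‖ ^ 2)
    (x : lp K 2) : A * ‖x‖ ^ 2 ≤ ‖T x‖ ^ 2 := by
  have hclosed : IsClosed {y : lp K 2 | A * ‖y‖ ^ 2 ≤ ‖T y‖ ^ 2} :=
    isClosed_le (by fun_prop) (by fun_prop)
  refine hclosed.mem_of_tendsto (lp.hasSum_single (by norm_num) x) (.of_forall fun F => ?_)
  simpa [norm_sum_single_sq] using hT F (fun i => x i)

end lp

section Frame

variable {𝕜 H ι : Type*} [RCLike 𝕜] [NormedAddCommGroup H] [InnerProductSpace 𝕜 H]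
  {K : ι → Type*} [∀ i, NormedAddCommGroup (K i)] [∀ i, InnerProductSpace 𝕜 (K i)]

noncomputable def analysisOp (Λ : ∀ i, H →L[𝕜] K i) {B : ℝ}
    (hΛ : ∀ (f : H) (F : Finset ι), ∑ i ∈ F, ‖Λ i f‖ ^ 2 ≤ B * ‖f‖ ^ 2) : H →L[𝕜] lp K 2 :=
  have hsum (f : H) : Summable fun i => ‖Λ i f‖ ^ 2 :=
    summable_of_sum_le (fun _ => by positivity) (hΛ f)
  LinearMap.mkContinuous
    { toFun f := ⟨fun i => Λ i f, memℓp_gen (by simpa using hsum f)⟩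
      map_add' f f' := Subtype.ext <| funext fun i => map_add (Λ i) f f'
      map_smul' c f := Subtype.ext <| funext fun i => map_smul (Λ i) c f }
    √B fun f => by
      rw [← Real.sqrt_sq (norm_nonneg _), ← Real.sqrt_sq (norm_nonneg f), ← Real.sqrt_mul']
      · refine Real.sqrt_le_sqrt ?_
        rw [(lp.hasSum_norm_sq _).tsum_eq.symm]
        exact (hsum f).tsum_le_of_sum_le (hΛ f)
      · positivity

variable {Λ : ∀ i, H →L[𝕜] K i} {B : ℝ}
  {hΛ : ∀ (f : H) (F : Finset ι), ∑ i ∈ F, ‖Λ i f‖ ^ 2 ≤ B * ‖f‖ ^ 2}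

@[simp]
theorem analysisOp_apply (f : H) (i : ι) : analysisOp Λ hΛ f i = Λ i f :=
  rfl

variable [CompleteSpace H] [∀ i, CompleteSpace (K i)]

theorem sum_norm_sq_le_of_norm_sum_adjoint_sq_le (hB : 0 ≤ B)
    (hbound : ∀ (F : Finset ι) (g : ∀ i, K i),
      ‖∑ i ∈ F, adjoint (Λ i) (g i)‖ ^ 2 ≤ B * ∑ i ∈ F, ‖g i‖ ^ 2)
    (f : H) (F : Finset ι) : ∑ i ∈ F, ‖Λ i f‖ ^ 2 ≤ B * ‖f‖ ^ 2 := by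
  set s := ∑ i ∈ F, ‖Λ i f‖ ^ 2
  set y := ∑ i ∈ F, adjoint (Λ i) (Λ i f)
  have hs : s = RCLike.re (inner 𝕜 f y) := by
    simp only [y, s, inner_sum, map_sum, adjoint_inner_right, inner_self_eq_norm_sq]
  have hsy : s ≤ ‖f‖ * ‖y‖ := hs ▸ (RCLike.re_le_norm _).trans (norm_inner_le_norm f y)
  have hy : ‖y‖ ^ 2 ≤ B * s := hbound F fun i => Λ i f
  have hs0 : 0 ≤ s := by positivity
  nlinarith [norm_nonneg f, norm_nonneg y, mul_nonneg hB (sq_nonneg ‖f‖)]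

theorem adjoint_analysisOp_single [DecidableEq ι] (i : ι) (g : K i) :
    adjoint (analysisOp Λ hΛ) (lp.single 2 i g) = adjoint (Λ i) g :=
  ext_inner_right 𝕜 fun f => by
    rw [adjoint_inner_left, adjoint_inner_left, lp.inner_single_left, analysisOp_apply]

theorem bijective_analysisOp (hcomplete : ∀ f : H, (∀ i, Λ i f = 0) → f = 0) {A : ℝ}
    (hA : 0 < A) (hlower : ∀ (F : Finset ι) (g : ∀ i, K i),
      A * ∑ i ∈ F, ‖g i‖ ^ 2 ≤ ‖∑ i ∈ F, adjoint (Λ i) (g i)‖ ^ 2) :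
    Function.Bijective (analysisOp Λ hΛ) := by
  classical
  have hinj : Function.Injective (analysisOp Λ hΛ) :=
    (injective_iff_map_eq_zero _).mpr fun f hf => hcomplete f fun i => congr($hf i)
  have hT : Function.Bijective (adjoint (analysisOp Λ hΛ)) := by
    refine (adjoint _).bijective_of_mul_norm_sq_le_of_injective_adjoint hA
      (lp.mul_norm_sq_le_norm_apply_sq_of_sum_single fun F g => ?_) (by rwa [adjoint_adjoint])
    simpa [adjoint_analysisOp_single] using hlower F g
  let S := ContinuousLinearEquiv.ofBijective _ (LinearMap.ker_eq_bot.mpr hT.1)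
    (LinearMap.range_eq_top.mpr hT.2)
  simpa [S, ContinuousLinearEquiv.coe_ofBijective] using S.adjoint.bijective

structure IsGOrthonormalBasis (Θ : ∀ i, H →L[𝕜] K i) : Prop where
  inner_adjoint_apply_self (i : ι) (g h : K i) :
    inner 𝕜 (adjoint (Θ i) g) (adjoint (Θ i) h) = inner 𝕜 g h
  inner_adjoint_apply_of_ne (i j : ι) (hij : i ≠ j) (g : K i) (h : K j) :
    inner 𝕜 (adjoint (Θ i) g) (adjoint (Θ j) h) = 0
  summable_norm_sq (f : H) : Summable fun i => ‖Θ i f‖ ^ 2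
  tsum_norm_sq (f : H) : ∑' i, ‖Θ i f‖ ^ 2 = ‖f‖ ^ 2

theorem norm_sum_adjoint_sq_of_orthonormal {Θ : ∀ i, H →L[𝕜] K i}
    (hnorm : ∀ (i : ι) (g h : K i), inner 𝕜 (adjoint (Θ i) g) (adjoint (Θ i) h) = inner 𝕜 g h)
    (horth : ∀ i j, i ≠ j → ∀ (g : K i) (h : K j),
      inner 𝕜 (adjoint (Θ i) g) (adjoint (Θ j) h) = 0)
    (F : Finset ι) (g : ∀ i, K i) :
    ‖∑ i ∈ F, adjoint (Θ i) (g i)‖ ^ 2 = ∑ i ∈ F, ‖g i‖ ^ 2 :=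
  OrthogonalFamily.norm_sum (V := fun i => (adjoint (Θ i)).toLinearMap.isometryOfInner (hnorm i))
    horth g F

theorem exists_riesz_bounds_comp_of_orthonormal {E : Type*} [NormedAddCommGroup E]
    [InnerProductSpace 𝕜 E] [CompleteSpace E] {Θ : ∀ i, H →L[𝕜] K i}
    (hnorm : ∀ (i : ι) (g h : K i), inner 𝕜 (adjoint (Θ i) g) (adjoint (Θ i) h) = inner 𝕜 g h)
    (horth : ∀ i j, i ≠ j → ∀ (g : K i) (h : K j),
      inner 𝕜 (adjoint (Θ i) g) (adjoint (Θ j) h) = 0)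
    (U : E ≃L[𝕜] H) :
    ∃ A B : ℝ, 0 < A ∧ A ≤ B ∧ ∀ (F : Finset ι) (g : ∀ i, K i),
      A * ∑ i ∈ F, ‖g i‖ ^ 2 ≤ ‖∑ i ∈ F, adjoint (Θ i ∘L (U : E →L[𝕜] H)) (g i)‖ ^ 2 ∧
      ‖∑ i ∈ F, adjoint (Θ i ∘L (U : E →L[𝕜] H)) (g i)‖ ^ 2 ≤ B * ∑ i ∈ F, ‖g i‖ ^ 2 := by
  obtain ⟨A, B, hA, hAB, hbounds⟩ := U.adjoint.exists_two_sided_norm_sq_bound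
  refine ⟨A, B, hA, hAB, fun F g => ?_⟩
  have hsum : ∑ i ∈ F, adjoint (Θ i ∘L (U : E →L[𝕜] H)) (g i) =
      U.adjoint (∑ i ∈ F, adjoint (Θ i) (g i)) := by
    simp [adjoint_comp]
  rw [hsum, ← norm_sum_adjoint_sq_of_orthonormal hnorm horth]
  exact hbounds _

theorem LinearIsometryEquiv.adjoint_evalCLM_comp_apply [DecidableEq ι] (W : H ≃ₗᵢ[𝕜] lp K 2)
    (i : ι) (g : K i) :
    adjoint (lp.evalCLM 𝕜 K 2 i ∘L (W : H →L[𝕜] lp K 2)) g = W.symm (lp.single 2 i g) := by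
  refine ext_inner_right 𝕜 fun f => ?_
  rw [adjoint_inner_left, ← W.inner_map_map, W.apply_symm_apply, lp.inner_single_left]
  rfl

theorem LinearIsometryEquiv.isGOrthonormalBasis_evalCLM_comp (W : H ≃ₗᵢ[𝕜] lp K 2) :
    IsGOrthonormalBasis fun i => lp.evalCLM 𝕜 K 2 i ∘L (W : H →L[𝕜] lp K 2) where
  inner_adjoint_apply_self i g h := by
    classical
    simp only [W.adjoint_evalCLM_comp_apply, LinearIsometryEquiv.inner_map_map,
      lp.inner_single_left, lp.single_apply_self]
  inner_adjoint_apply_of_ne i j hij g h := by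
    classical
    simp only [W.adjoint_evalCLM_comp_apply, LinearIsometryEquiv.inner_map_map,
      lp.inner_single_left, lp.single_apply_ne 2 j _ hij, inner_zero_right]
  summable_norm_sq f := (lp.hasSum_norm_sq (W f)).summable
  tsum_norm_sq f := (lp.hasSum_norm_sq (W f)).tsum_eq.trans (by rw [W.norm_map])

end Frame

theorem gRieszBasis_iff_gOrthonormalBasis_comp_invertible_general
    {H : Type*} [NormedAddCommGroup H] [InnerProductSpace ℂ H] [CompleteSpace H]
    {I : Type*}
    (K : I → Type*) [∀ i, NormedAddCommGroup (K i)] [∀ i, InnerProductSpace ℂ (K i)]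
    [∀ i, CompleteSpace (K i)]
    (Λ : ∀ i : I, H →L[ℂ] K i) :
    ((∀ f : H, (∀ i : I, Λ i f = 0) → f = 0) ∧
      ∃ A B : ℝ, 0 < A ∧ A ≤ B ∧
        ∀ (F : Finset I) (g : ∀ i : I, K i),
          A * ∑ i ∈ F, ‖g i‖ ^ 2 ≤ ‖∑ i ∈ F, ContinuousLinearMap.adjoint (Λ i) (g i)‖ ^ 2 ∧
          ‖∑ i ∈ F, ContinuousLinearMap.adjoint (Λ i) (g i)‖ ^ 2 ≤ B * ∑ i ∈ F, ‖g i‖ ^ 2) ↔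
    (∃ (Θ : ∀ i : I, H →L[ℂ] K i) (U : H ≃L[ℂ] H),
      (∀ (i : I) (g h : K i),
        (inner ℂ (ContinuousLinearMap.adjoint (Θ i) g) (ContinuousLinearMap.adjoint (Θ i) h) : ℂ) =
          (inner ℂ g h : ℂ)) ∧
      (∀ (i j : I), i ≠ j → ∀ (g : K i) (h : K j),
        (inner ℂ (ContinuousLinearMap.adjoint (Θ i) g) (ContinuousLinearMap.adjoint (Θ j) h) : ℂ)
          = 0) ∧
      (∀ f : H, Summable fun i : I => ‖Θ i f‖ ^ 2) ∧
      (∀ f : H, ∑' i : I, ‖Θ i f‖ ^ 2 = ‖f‖ ^ 2) ∧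
      (∀ i : I, Λ i = (Θ i).comp (U : H →L[ℂ] H))) := by
  constructor
  · rintro ⟨hcomplete, A, B, hA, hAB, hRiesz⟩
    have hbessel := sum_norm_sq_le_of_norm_sum_adjoint_sq_le (by linarith) fun F g => (hRiesz F g).2
    have hV := bijective_analysisOp (hΛ := hbessel) hcomplete hA fun F g => (hRiesz F g).1
    set e := ContinuousLinearEquiv.ofBijective (analysisOp Λ hbessel)
      (LinearMap.ker_eq_bot.mpr hV.1) (LinearMap.range_eq_top.mpr hV.2)
    obtain ⟨W⟩ := e.nonempty_linearIsometryEquiv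
    obtain ⟨hnorm, horth, hsummable, hparseval⟩ := W.isGOrthonormalBasis_evalCLM_comp
    refine ⟨_, e.trans W.symm.toContinuousLinearEquiv, hnorm, horth, hsummable, hparseval,
      fun i => ?_⟩
    ext f
    change Λ i f = (W (W.symm (analysisOp Λ hbessel f))) i
    rw [W.apply_symm_apply, analysisOp_apply]
  · rintro ⟨Θ, U, hnorm, horth, -, hparseval, hfactor⟩
    obtain rfl : Λ = fun i => (Θ i).comp (U : H →L[ℂ] H) := funext hfactor
    refine ⟨fun f hf => U.map_eq_zero_iff.mp ?_,
      exists_riesz_bounds_comp_of_orthonormal hnorm horth U⟩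
    rw [← norm_eq_zero, ← pow_eq_zero_iff two_ne_zero, ← hparseval]
    simp [fun i => show Θ i (U f) = 0 from hf i]

/-- A family `Λ = (Λ_i : H → K_i)_{i∈I}` is a g-Riesz basis for `H` if and only if
there exist a g-orthonormal basis `(Θ_i)_{i∈I}` and `U ∈ GL(H)` with `Λ_i = Θ_i ∘ U`. -/
theorem gRieszBasis_iff_gOrthonormalBasis_comp_invertible
    {H : Type*} [NormedAddCommGroup H] [InnerProductSpace ℂ H] [CompleteSpace H]
    [TopologicalSpace.SeparableSpace H]
    {I : Type*} [Countable I]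
    (K : I → Type*) [∀ i, NormedAddCommGroup (K i)] [∀ i, InnerProductSpace ℂ (K i)]
    [∀ i, CompleteSpace (K i)] [∀ i, TopologicalSpace.SeparableSpace (K i)]
    (Λ : ∀ i : I, H →L[ℂ] K i) :
    ((∀ f : H, (∀ i : I, Λ i f = 0) → f = 0) ∧
      ∃ A B : ℝ, 0 < A ∧ A ≤ B ∧
        ∀ (F : Finset I) (g : ∀ i : I, K i),
          A * ∑ i ∈ F, ‖g i‖ ^ 2 ≤ ‖∑ i ∈ F, ContinuousLinearMap.adjoint (Λ i) (g i)‖ ^ 2 ∧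
          ‖∑ i ∈ F, ContinuousLinearMap.adjoint (Λ i) (g i)‖ ^ 2 ≤ B * ∑ i ∈ F, ‖g i‖ ^ 2) ↔
    (∃ (Θ : ∀ i : I, H →L[ℂ] K i) (U : H ≃L[ℂ] H),
      (∀ (i : I) (g h : K i),
        (inner ℂ (ContinuousLinearMap.adjoint (Θ i) g) (ContinuousLinearMap.adjoint (Θ i) h) : ℂ) =
          (inner ℂ g h : ℂ)) ∧
      (∀ (i j : I), i ≠ j → ∀ (g : K i) (h : K j),
        (inner ℂ (ContinuousLinearMap.adjoint (Θ i) g) (ContinuousLinearMap.adjoint (Θ j) h) : ℂ)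
          = 0) ∧
      (∀ f : H, Summable fun i : I => ‖Θ i f‖ ^ 2) ∧
      (∀ f : H, ∑' i : I, ‖Θ i f‖ ^ 2 = ‖f‖ ^ 2) ∧
      (∀ i : I, Λ i = (Θ i).comp (U : H →L[ℂ] H))) :=
  gRieszBasis_iff_gOrthonormalBasis_comp_invertible_general K Λ
end

section
/- Let Λ = (Λ_i)_{i∈ℕ} be a g-frame for H with respect to K, and suppose there exists a dual g-frame Θ = (Θ_i)_{i∈ℕ} of Λ such that Λ_{k+1} f = Σ_{i∈ℕ} Λ_k(Θ_i*(Λ_{i+1} f)) for every k ∈ ℕ and f ∈ H. Then Λ is represented by a bounded operator: the formula T f = Σ_{i∈ℕ} Θ_i*(Λ_{i+1} f) defines a bounded linear operator T : H → H satisfying Λ_{i+1} = Λ_i ∘ T for all i ∈ ℕ. -/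
/-!
The Bessel bounds make the analysis operators `f ↦ (Θ i f)ᵢ` and `f ↦ (Λ (i + 1) f)ᵢ` bounded
maps `H → ℓ²(ℕ, K)`, and the adjoint of the first sends `c` to `∑ i, (Θ i)† (c i)`. Hence `T` is
the composite of the adjoint of the first with the second, and `Λ k ∘ T = Λ (k + 1)` follows by
pulling the continuous `Λ k` inside the series.
-/

open ContinuousLinearMap
open scoped lp

section

variable {H K : Type*} [NormedAddCommGroup H] [InnerProductSpace ℂ H]
  [NormedAddCommGroup K] [InnerProductSpace ℂ K]

theorem exists_analysisOperator (Θ : ℕ → H →L[ℂ] K) {B : ℝ}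
    (hsum : ∀ f, Summable fun i => ‖Θ i f‖ ^ 2)
    (hup : ∀ f, ∑' i, ‖Θ i f‖ ^ 2 ≤ B * ‖f‖ ^ 2) :
    ∃ U : H →L[ℂ] ℓ²(ℕ, K), ∀ f i, U f i = Θ i f := by
  have hmem (f : H) : Memℓp (fun i => Θ i f) 2 := memℓp_gen (by simpa using hsum f)
  let U : H →ₗ[ℂ] ℓ²(ℕ, K) :=
    { toFun f := ⟨_, hmem f⟩
      map_add' f g := by ext1; exact funext fun i => map_add (Θ i) f g
      map_smul' c f := by ext1; exact funext fun i => map_smul (Θ i) c f }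
  refine ⟨U.mkContinuous √B fun f => ?_, fun f i => rfl⟩
  have hnorm : ‖U f‖ ^ 2 = ∑' i, ‖Θ i f‖ ^ 2 := by
    have h := lp.norm_rpow_eq_tsum (p := 2) (by norm_num) (U f)
    simp only [ENNReal.toReal_ofNat, Real.rpow_two] at h
    exact h
  calc ‖U f‖ ≤ √(B * ‖f‖ ^ 2) := by
        simpa using Real.abs_le_sqrt (hnorm.trans_le (hup f))
    _ = √B * ‖f‖ := by rw [Real.sqrt_mul' B (sq_nonneg _), Real.sqrt_sq (norm_nonneg f)]

theorem hasSum_adjoint_apply_of_analysisOperator [CompleteSpace H] [CompleteSpace K]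
    {Θ : ℕ → H →L[ℂ] K} {U : H →L[ℂ] ℓ²(ℕ, K)} (hU : ∀ f i, U f i = Θ i f) (c : ℓ²(ℕ, K)) :
    HasSum (fun i => adjoint (Θ i) (c i)) (adjoint U c) := by
  have hsingle (i : ℕ) (v : K) : adjoint U (lp.single 2 i v) = adjoint (Θ i) v :=
    ext_inner_left ℂ fun f => by
      rw [adjoint_inner_right, adjoint_inner_right, lp.inner_single_right, hU]
  simpa only [Function.comp_def, hsingle] using
    (lp.hasSum_single ENNReal.ofNat_ne_top c).map _ (adjoint U).continuous

end

theorem gframe_representation_of_dual_identity_general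
    {H K : Type*} [NormedAddCommGroup H] [InnerProductSpace ℂ H] [CompleteSpace H]
    [NormedAddCommGroup K] [InnerProductSpace ℂ K] [CompleteSpace K]
    (Λ Θ : ℕ → (H →L[ℂ] K)) (B B' : ℝ)
    (hsumΛ : ∀ f : H, Summable fun i : ℕ => ‖Λ i f‖ ^ 2)
    (hupΛ : ∀ f : H, ∑' i : ℕ, ‖Λ i f‖ ^ 2 ≤ B * ‖f‖ ^ 2)
    (hsumΘ : ∀ f : H, Summable fun i : ℕ => ‖Θ i f‖ ^ 2)
    (hupΘ : ∀ f : H, ∑' i : ℕ, ‖Θ i f‖ ^ 2 ≤ B' * ‖f‖ ^ 2)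
    (hid : ∀ (k : ℕ) (f : H),
      Λ (k + 1) f = ∑' i : ℕ, Λ k (ContinuousLinearMap.adjoint (Θ i) (Λ (i + 1) f))) :
    ∃ T : H →L[ℂ] H,
      (∀ f : H, T f = ∑' i : ℕ, ContinuousLinearMap.adjoint (Θ i) (Λ (i + 1) f)) ∧
      ∀ i : ℕ, Λ (i + 1) = (Λ i).comp T := by
  have hsumΛsucc (f : H) : Summable fun i => ‖Λ (i + 1) f‖ ^ 2 :=
    (summable_nat_add_iff 1).mpr (hsumΛ f)
  have hupΛsucc (f : H) : ∑' i, ‖Λ (i + 1) f‖ ^ 2 ≤ B * ‖f‖ ^ 2 := by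
    linarith [(hsumΛ f).tsum_eq_zero_add, hupΛ f, sq_nonneg ‖Λ 0 f‖]
  obtain ⟨U, hU⟩ := exists_analysisOperator Θ hsumΘ hupΘ
  obtain ⟨V, hV⟩ := exists_analysisOperator (fun i => Λ (i + 1)) hsumΛsucc hupΛsucc
  have hT (f : H) :
      HasSum (fun i => adjoint (Θ i) (Λ (i + 1) f)) (adjoint U (V f)) := by
    simpa only [hV] using hasSum_adjoint_apply_of_analysisOperator hU (V f)
  refine ⟨adjoint U ∘L V, fun f => (hT f).tsum_eq.symm, fun k => ?_⟩
  ext f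
  rw [hid k f]
  exact ((hT f).map (Λ k) (Λ k).continuous).tsum_eq

/-- If a g-frame `Λ = (Λ_i)_{i∈ℕ}` has a dual g-frame `Θ` satisfying
`Λ_{k+1} f = ∑_i Λ_k (Θ_i* (Λ_{i+1} f))` for all `k, f`, then
`T f := ∑_i Θ_i* (Λ_{i+1} f)` defines a bounded operator representing `Λ`. -/
theorem gframe_representation_of_dual_identity
    {H K : Type*} [NormedAddCommGroup H] [InnerProductSpace ℂ H] [CompleteSpace H]
    [TopologicalSpace.SeparableSpace H]
    [NormedAddCommGroup K] [InnerProductSpace ℂ K] [CompleteSpace K]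
    [TopologicalSpace.SeparableSpace K]
    (Λ Θ : ℕ → (H →L[ℂ] K)) (A B A' B' : ℝ) (hA : 0 < A) (hAB : A ≤ B)
    (hA' : 0 < A') (hAB' : A' ≤ B')
    (hsumΛ : ∀ f : H, Summable fun i : ℕ => ‖Λ i f‖ ^ 2)
    (hlowΛ : ∀ f : H, A * ‖f‖ ^ 2 ≤ ∑' i : ℕ, ‖Λ i f‖ ^ 2)
    (hupΛ : ∀ f : H, ∑' i : ℕ, ‖Λ i f‖ ^ 2 ≤ B * ‖f‖ ^ 2)
    (hsumΘ : ∀ f : H, Summable fun i : ℕ => ‖Θ i f‖ ^ 2)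
    (hlowΘ : ∀ f : H, A' * ‖f‖ ^ 2 ≤ ∑' i : ℕ, ‖Θ i f‖ ^ 2)
    (hupΘ : ∀ f : H, ∑' i : ℕ, ‖Θ i f‖ ^ 2 ≤ B' * ‖f‖ ^ 2)
    (hdual : ∀ f : H, (∑' i : ℕ, ContinuousLinearMap.adjoint (Λ i) (Θ i f)) = f)
    (hid : ∀ (k : ℕ) (f : H),
      Λ (k + 1) f = ∑' i : ℕ, Λ k (ContinuousLinearMap.adjoint (Θ i) (Λ (i + 1) f))) :
    ∃ T : H →L[ℂ] H,
      (∀ f : H, T f = ∑' i : ℕ, ContinuousLinearMap.adjoint (Θ i) (Λ (i + 1) f)) ∧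
      ∀ i : ℕ, Λ (i + 1) = (Λ i).comp T :=
  gframe_representation_of_dual_identity_general Λ Θ B B' hsumΛ hupΛ hsumΘ hupΘ hid
end

section
/- Let F = (f_i)_{i∈ℤ} be a frame sequence in H (a frame for the closed subspace it spans) whose linear span is infinite-dimensional. Then the following are equivalent: (i) the family (f_i)_{i∈ℤ} is linearly independent; (ii) there is a well-defined linear bijection T : span{f_i : i ∈ ℤ} → span{f_i : i ∈ ℤ} (of the algebraic linear span) with T f_i = f_{i+1} for all i ∈ ℤ. In the affirmative case, f_i = T^i f_0 for all i ∈ ℤ. -/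
/-! An independent family is a basis of its span, and the shift `i ↦ i + 1` of this basis is
the required `T`. Conversely, take a dependence relation and let `b` be its largest index with
nonzero coefficient: then `f b` lies in the span `S` of finitely many predecessors
`f a, …, f (b - 1)`, so `T` maps `S` into itself, hence onto itself as `S` is finite-dimensional.
Every power of `T` then preserves `S`, and `f (b + n) = T ^ n (f b) ∈ S` makes the span of the
family finite-dimensional. -/

section

open Set Submodule
open scoped Pointwise

theorem zpow_smul_of_smul_eq_add_one {G α : Type*} [Group G] [MulAction G α] {g : G}
    {x : ℤ → α} (hg : ∀ i, g • x i = x (i + 1)) (n i : ℤ) :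
    (g ^ n) • x i = x (i + n) := by
  induction n using Int.induction_on generalizing i with
  | zero => simp
  | succ k ih => rw [zpow_add_one, mul_smul, hg, ih]; congr 1; ring
  | pred k ih =>
    have hinv : g⁻¹ • x i = x (i - 1) :=
      inv_smul_eq_iff.mpr (by rw [hg, sub_add_cancel])
    rw [zpow_sub_one, mul_smul, hinv, ih]; congr 1; ring

variable {K M : Type*} [Field K] [AddCommGroup M] [Module K M]

theorem exists_mem_span_image_Ico_of_not_linearIndependent {u : ℤ → M}
    (h : ¬ LinearIndependent K u) : ∃ a b, u b ∈ span K (u '' Ico a b) := by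
  classical
  obtain ⟨s, c, hrel, j, hjs, hj⟩ := not_linearIndependent_iff.mp h
  set t := s.filter (c · ≠ 0)
  have ht : t.Nonempty := ⟨j, Finset.mem_filter.mpr ⟨hjs, hj⟩⟩
  have hb : c (t.max' ht) ≠ 0 := (Finset.mem_filter.mp (t.max'_mem ht)).2
  refine ⟨t.min' ht, t.max' ht, ?_⟩
  have hrel' : ∑ i ∈ t, c i • u i = 0 :=
    (Finset.sum_filter_of_ne (p := (c · ≠ 0)) fun i _ hi hci =>
      hi (by rw [hci, zero_smul])).trans hrel
  rw [← Finset.add_sum_erase _ _ (t.max'_mem ht), add_eq_zero_iff_eq_neg] at hrel'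
  rw [← inv_smul_smul₀ hb (u _), hrel']
  refine smul_mem _ _ (neg_mem (sum_mem fun i hi => smul_mem _ _ (subset_span ?_)))
  exact ⟨i, ⟨t.min'_le i (Finset.mem_of_mem_erase hi),
    lt_of_le_of_ne (t.le_max' i (Finset.mem_of_mem_erase hi)) (Finset.ne_of_mem_erase hi)⟩, rfl⟩

theorem finiteDimensional_span_range_of_shift {u : ℤ → M} (T : M ≃ₗ[K] M)
    (hT : ∀ i, T (u i) = u (i + 1)) (h : ¬ LinearIndependent K u) :
    FiniteDimensional K (span K (range u)) := by
  obtain ⟨a, b, hb⟩ := exists_mem_span_image_Ico_of_not_linearIndependent h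
  set S := span K (u '' Ico a b)
  have : FiniteDimensional K S := FiniteDimensional.span_of_finite K ((finite_Ico a b).image u)
  have hTS : T • S = S := by
    refine eq_of_le_of_finrank_eq (?_ : S.map (T : M →ₗ[K] M) ≤ S) (T.finrank_map_eq S)
    rw [map_span, span_le]
    rintro _ ⟨_, ⟨i, hi, rfl⟩, rfl⟩
    rcases eq_or_lt_of_le (Int.add_one_le_of_lt hi.2) with hib | hib
    · simpa [hT, hib] using hb
    · exact subset_span ⟨i + 1, ⟨by linarith [hi.1], hib⟩, (hT i).symm⟩
  have hpow : ∀ n : ℤ, T ^ n • S = S := fun n =>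
    (zpow_mem (MulAction.mem_stabilizer_iff.mpr hTS) n : T ^ n ∈ MulAction.stabilizer _ S)
  refine Submodule.finiteDimensional_of_le (S₂ := S) (span_le.mpr ?_)
  rintro _ ⟨n, rfl⟩
  rw [← sub_add_cancel n b, add_comm, ← zpow_smul_of_smul_eq_add_one (g := T) hT,
    ← hpow (n - b)]
  exact smul_mem_pointwise_smul _ _ _ hb

end

theorem frame_sequence_Z_linearIndependent_iff_shift_bijection_general
    {H : Type*} [NormedAddCommGroup H] [InnerProductSpace ℂ H]
    (f : ℤ → H)
    (hinf : ¬ FiniteDimensional ℂ (Submodule.span ℂ (Set.range f))) :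
    LinearIndependent ℂ f ↔
      ∃ T : (Submodule.span ℂ (Set.range f)) ≃ₗ[ℂ] (Submodule.span ℂ (Set.range f)),
        (∀ i : ℤ, T ⟨f i, Submodule.subset_span (Set.mem_range_self i)⟩ =
          ⟨f (i + 1), Submodule.subset_span (Set.mem_range_self (i + 1))⟩) ∧
        (∀ i : ℤ, (T ^ i) ⟨f 0, Submodule.subset_span (Set.mem_range_self 0)⟩ =
          ⟨f i, Submodule.subset_span (Set.mem_range_self i)⟩) := by
  set V := Submodule.span ℂ (Set.range f)
  set u : ℤ → V := fun i => ⟨f i, Submodule.subset_span (Set.mem_range_self i)⟩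
  have hpow : ∀ T : V ≃ₗ[ℂ] V, (∀ i, T (u i) = u (i + 1)) →
      ∀ i, (T ^ i) (u 0) = u i := fun T hT i => by
    simpa using zpow_smul_of_smul_eq_add_one (g := T) hT i 0
  constructor
  · intro hli
    let b := Module.Basis.span hli
    let T := b.equiv b (Equiv.addRight 1)
    have hb : ∀ i, b i = u i := Module.Basis.span_apply hli
    have hT : ∀ i, T (u i) = u (i + 1) := fun i => by
      rw [← hb, ← hb, b.equiv_apply]; rfl
    exact ⟨T, hT, hpow T hT⟩
  · rintro ⟨T, hT, -⟩
    by_contra hdep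
    have hdep' : ¬ LinearIndependent ℂ u := fun hu => hdep (hu.map' _ (Submodule.ker_subtype _))
    have := finiteDimensional_span_range_of_shift T hT hdep'
    refine hinf (Submodule.finiteDimensional_of_le
      (S₂ := (Submodule.span ℂ (Set.range u)).map V.subtype) (Submodule.span_le.mpr ?_))
    rintro _ ⟨i, rfl⟩
    exact ⟨u i, Submodule.subset_span (Set.mem_range_self i), rfl⟩

/-- For a frame sequence `F = (f_i)_{i∈ℤ}` in `H` spanning an
infinite-dimensional subspace, `F` is linearly independent if and only if `T f_i := f_{i+1}`
is well defined and extends to a linear bijection of the algebraic span; in the affirmative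
case `f_i = T^i f_0` for all `i ∈ ℤ`. -/
theorem frame_sequence_Z_linearIndependent_iff_shift_bijection
    {H : Type*} [NormedAddCommGroup H] [InnerProductSpace ℂ H] [CompleteSpace H]
    [TopologicalSpace.SeparableSpace H]
    (f : ℤ → H) (A B : ℝ) (hA : 0 < A) (hAB : A ≤ B)
    (hsum : ∀ g : H, Summable fun i : ℤ => ‖(inner ℂ g (f i) : ℂ)‖ ^ 2)
    (hframe : ∀ g : H,
      g ∈ (Submodule.span ℂ (Set.range f)).topologicalClosure →
        A * ‖g‖ ^ 2 ≤ ∑' i : ℤ, ‖(inner ℂ g (f i) : ℂ)‖ ^ 2 ∧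
        ∑' i : ℤ, ‖(inner ℂ g (f i) : ℂ)‖ ^ 2 ≤ B * ‖g‖ ^ 2)
    (hinf : ¬ FiniteDimensional ℂ (Submodule.span ℂ (Set.range f))) :
    LinearIndependent ℂ f ↔
      ∃ T : (Submodule.span ℂ (Set.range f)) ≃ₗ[ℂ] (Submodule.span ℂ (Set.range f)),
        (∀ i : ℤ, T ⟨f i, Submodule.subset_span (Set.mem_range_self i)⟩ =
          ⟨f (i + 1), Submodule.subset_span (Set.mem_range_self (i + 1))⟩) ∧
        (∀ i : ℤ, (T ^ i) ⟨f 0, Submodule.subset_span (Set.mem_range_self 0)⟩ =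
          ⟨f i, Submodule.subset_span (Set.mem_range_self i)⟩) :=
  frame_sequence_Z_linearIndependent_iff_shift_bijection_general f hinf
end
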